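/- The Euler–Lagrange equation of the functional J(ξ) = ∫_α^β [(ξ(u) - v(u))²/2 - a(u)² ln(ξ'(u))] du is ξ(u) - v(u) + (a(u)²/ξ'(u))' = 0; moreover, if ξ is a strictly increasing C² solution with inverse u(ξ), then multiplying by u'(ξ) transforms this equation into (a(u)² u')' = (v(u) - ξ) u', i.e., the self-similar form of the degenerate parabolic equation u_t + v(u)u_x = t(a²(u)u_x)_x. -/

import Mathlib

open MeasureTheory

noncomputable def J (α β : ℝ) (v a : ℝ → ℝ) (ξ : ℝ → ℝ) : ℝ :=
  ∫ u in α..β, ((ξ u - v u) ^ 2 / 2 - (a u) ^ 2 * Real.log (deriv ξ u))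

/-!
The first variation comes from differentiating under the integral sign: for `t` in a compact
neighbourhood of `0`, `ξ' + t η'` stays positive on `[α, β]`, so the `t`-derivative of the
integrand is jointly continuous and hence uniformly bounded. Integrating `a² η' / ξ'` by parts
then gives the Euler–Lagrange form.

For the self-similar form, `u' = 1 / ξ'(u)` turns `a(u)² u'` into `(a² / ξ') ∘ u`, so by the
chain rule and the Euler–Lagrange equation `(a(u)² u')' = (a² / ξ')'(u) u' = (v(u) - ξ) u'`.
This is proved on `(ξ(α), ξ(β))`, where `u` is a two-sided inverse near each point, and extends
to the endpoints by continuity.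
-/

open Set Filter Topology intervalIntegral
open scoped Interval

theorem hasDerivAt_intervalIntegral_of_continuousOn {E : Type*} [NormedAddCommGroup E]
    [NormedSpace ℝ E] [CompleteSpace E] {F F' : ℝ → ℝ → E} {x₀ a b : ℝ} {K : Set ℝ}
    (hK : IsCompact K) (hKx₀ : K ∈ 𝓝 x₀) (hF : ∀ t ∈ K, ContinuousOn (F t) [[a, b]])
    (hF' : ContinuousOn (Function.uncurry F') (K ×ˢ [[a, b]]))
    (hderiv : ∀ t ∈ K, ∀ u ∈ [[a, b]], HasDerivAt (F · u) (F' t u) t) :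
    HasDerivAt (fun t => ∫ u in a..b, F t u) (∫ u in a..b, F' x₀ u) x₀ := by
  obtain ⟨C, hC⟩ := (hK.prod isCompact_uIcc).exists_bound_of_continuousOn hF'
  have hx₀ : x₀ ∈ K := mem_of_mem_nhds hKx₀
  have hF'x₀ : ContinuousOn (F' x₀) [[a, b]] :=
    hF'.comp (continuousOn_const.prodMk continuousOn_id) fun u hu => ⟨hx₀, hu⟩
  refine (hasDerivAt_integral_of_dominated_loc_of_deriv_le (bound := fun _ => C) hKx₀ ?_
    (hF x₀ hx₀).intervalIntegrable
    ((hF'x₀.mono uIoc_subset_uIcc).aestronglyMeasurable measurableSet_uIoc) ?_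
    intervalIntegrable_const ?_).2
  · filter_upwards [hKx₀] with t ht
    exact ((hF t ht).mono uIoc_subset_uIcc).aestronglyMeasurable measurableSet_uIoc
  · exact ae_of_all _ fun u hu t ht => hC (t, u) ⟨ht, uIoc_subset_uIcc hu⟩
  · exact ae_of_all _ fun u hu t ht => hderiv t ht u (uIoc_subset_uIcc hu)

theorem integral_mul_sub_mul_deriv_eq_integral_add_deriv_mul {f G η : ℝ → ℝ} {a b : ℝ}
    {U : Set ℝ} (hf : IntervalIntegrable f volume a b) (hU : IsOpen U) (habU : [[a, b]] ⊆ U)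
    (hG : ContDiffOn ℝ 1 G U) (hη : ContDiff ℝ 1 η) (ha : η a = 0) (hb : η b = 0) :
    ∫ x in a..b, (f x * η x - G x * deriv η x) = ∫ x in a..b, (f x + deriv G x) * η x := by
  have hfη : IntervalIntegrable (fun x => f x * η x) volume a b :=
    hf.mul_continuousOn hη.continuous.continuousOn
  have hG' : ContinuousOn (deriv G) [[a, b]] :=
    (hG.continuousOn_deriv_of_isOpen hU le_rfl).mono habU
  have hη' : Continuous (deriv η) := hη.continuous_deriv le_rfl
  have hGη' : IntervalIntegrable (fun x => G x * deriv η x) volume a b :=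
    ((hG.continuousOn.mono habU).mul hη'.continuousOn).intervalIntegrable
  have hG'η : IntervalIntegrable (fun x => deriv G x * η x) volume a b :=
    (hG'.mul hη.continuous.continuousOn).intervalIntegrable
  have hparts : ∫ x in a..b, G x * deriv η x = -∫ x in a..b, deriv G x * η x := by
    rw [intervalIntegral.integral_mul_deriv_eq_deriv_mul
      (fun x hx => ((hG.differentiableOn one_ne_zero).differentiableAt
        (hU.mem_nhds (habU hx))).hasDerivAt)
      (fun x _ => (hη.differentiable one_ne_zero x).hasDerivAt)
      hG'.intervalIntegrable (hη'.intervalIntegrable a b), ha, hb]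
    ring
  simp only [add_mul]
  rw [integral_sub hfη hGη', integral_add hfη hG'η, hparts, sub_neg_eq_add]

theorem hasDerivAt_J_add_smul {α β : ℝ} {v a ξ η : ℝ → ℝ} (hv : Continuous v)
    (ha : Continuous a) (hξ : ContDiff ℝ 1 ξ) (hη : ContDiff ℝ 1 η)
    (hξ' : ∀ u ∈ [[α, β]], 0 < deriv ξ u) :
    HasDerivAt (fun t : ℝ => J α β v a (fun u => ξ u + t * η u))
      (∫ u in α..β, ((ξ u - v u) * η u - a u ^ 2 / deriv ξ u * deriv η u)) 0 := by
  have hξd := hξ.differentiable one_ne_zero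
  have hηd := hη.differentiable one_ne_zero
  have hξc := hξ.continuous
  have hηc := hη.continuous
  have hξ'c : Continuous (deriv ξ) := hξ.continuous_deriv le_rfl
  have hη'c : Continuous (deriv η) := hη.continuous_deriv le_rfl
  have hderiv_add (t : ℝ) :
      deriv (fun u => ξ u + t * η u) = fun u => deriv ξ u + t * deriv η u :=
    funext fun u => ((hξd u).hasDerivAt.add ((hηd u).hasDerivAt.const_mul t)).deriv
  have hpos :
      ∀ᶠ t in 𝓝 (0 : ℝ), ∀ u ∈ [[α, β]], 0 < deriv ξ u + t * deriv η u := by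
    refine isCompact_uIcc.eventually_forall_of_forall_eventually fun u hu => ?_
    have hcont : Continuous fun z : ℝ × ℝ => deriv ξ z.2 + z.1 * deriv η z.2 := by fun_prop
    exact (hcont.tendsto (0, u)).eventually_const_lt (by simpa using hξ' u hu)
  obtain ⟨K, hK0, hKpos, hK⟩ := local_compact_nhds hpos
  simp only [J, hderiv_add]
  have := hasDerivAt_intervalIntegral_of_continuousOn (a := α) (b := β) hK hK0
    (F := fun t u => (ξ u + t * η u - v u) ^ 2 / 2
      - a u ^ 2 * Real.log (deriv ξ u + t * deriv η u))
    (F' := fun t u => (ξ u + t * η u - v u) * η u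
      - a u ^ 2 / (deriv ξ u + t * deriv η u) * deriv η u) ?_ ?_ ?_
  · simpa using this
  · intro t ht
    exact ContinuousOn.sub (by fun_prop)
      ((by fun_prop : Continuous fun u => a u ^ 2).continuousOn.mul
        (ContinuousOn.log (by fun_prop) fun u hu => (hKpos ht u hu).ne'))
  · exact ContinuousOn.sub (by fun_prop) (ContinuousOn.mul
      (ContinuousOn.div (by fun_prop) (by fun_prop) fun p hp => (hKpos hp.1 p.2 hp.2).ne')
      (by fun_prop))
  · intro t ht u hu
    have hlin (c d : ℝ) : HasDerivAt (fun s : ℝ => c + s * d) d t := by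
      simpa using ((hasDerivAt_id t).mul_const d).const_add c
    have hsq := ((hlin (ξ u) (η u)).sub_const (v u)).pow 2 |>.div_const 2
    have hlog := (hlin (deriv ξ u) (deriv η u)).log (hKpos ht u hu).ne'
    exact (hsq.sub (hlog.const_mul (a u ^ 2))).congr_deriv (by norm_num; ring)

theorem deriv_comp_mul_deriv_of_rightInvOn {g ξ w : ℝ → ℝ} {s : Set ℝ} {x : ℝ}
    (hs : IsOpen s) (hx : x ∈ s) (hinv : RightInvOn w ξ s) (hw : ContinuousOn w s)
    (hξ : ∀ y ∈ s, DifferentiableAt ℝ ξ (w y)) (hξ0 : ∀ y ∈ s, deriv ξ (w y) ≠ 0)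
    (hg : DifferentiableAt ℝ (fun u => g u / deriv ξ u) (w x)) :
    deriv (fun y => g (w y) * deriv w y) x =
      deriv (fun u => g u / deriv ξ u) (w x) * deriv w x := by
  have hw' (y : ℝ) (hy : y ∈ s) : HasDerivAt w (deriv ξ (w y))⁻¹ y :=
    (hξ y hy).hasDerivAt.of_local_left_inverse (hw.continuousAt (hs.mem_nhds hy))
      (hξ0 y hy) (eventually_of_mem (hs.mem_nhds hy) hinv)
  have hcomp : (fun y => g (w y) * deriv w y) =ᶠ[𝓝 x] (fun u => g u / deriv ξ u) ∘ w :=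
    eventually_of_mem (hs.mem_nhds hx) fun y hy => by
      simp only [(hw' y hy).deriv, Function.comp_apply, div_eq_mul_inv]
  rw [hcomp.deriv_eq, deriv_comp x hg (hw' x hx).differentiableAt]

theorem eqOn_deriv_sq_comp_mul_deriv_of_eulerLagrange {α β : ℝ} (hαβ : α < β)
    {v a ξ w : ℝ → ℝ} (hv : Continuous v) (ha : ContDiff ℝ 1 a) (hξ : ContDiff ℝ 2 ξ)
    (hξ' : ∀ u ∈ Icc α β, deriv ξ u ≠ 0) (hw : ContDiff ℝ 2 w)
    (hinv : LeftInvOn w ξ (Icc α β))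
    (hEL : ∀ u ∈ Icc α β, ξ u - v u + deriv (fun u' => a u' ^ 2 / deriv ξ u') u = 0) :
    EqOn (deriv fun x => a (w x) ^ 2 * deriv w x) (fun x => (v (w x) - x) * deriv w x)
      (Icc (ξ α) (ξ β)) := by
  have hξd : Differentiable ℝ ξ := hξ.differentiable two_ne_zero
  have hξ'd : Differentiable ℝ (deriv ξ) := hξ.deriv'.differentiable one_ne_zero
  have hw' : ContDiff ℝ 1 (deriv w) := hw.deriv'
  have hsurj : Icc (ξ α) (ξ β) ⊆ ξ '' Icc α β :=
    intermediate_value_Icc hαβ.le hξd.continuous.continuousOn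
  have hmaps : MapsTo w (Icc (ξ α) (ξ β)) (Icc α β) := fun x hx => by
    obtain ⟨u, hu, rfl⟩ := hsurj hx
    rwa [hinv hu]
  have hrinv : RightInvOn w ξ (Ioo (ξ α) (ξ β)) := fun x hx =>
    hinv.rightInvOn_image (hsurj (Ioo_subset_Icc_self hx))
  have hopen : EqOn (deriv fun x => a (w x) ^ 2 * deriv w x)
      (fun x => (v (w x) - x) * deriv w x) (Ioo (ξ α) (ξ β)) := fun x hx => by
    have hwx := hmaps (Ioo_subset_Icc_self hx)
    have hG : DifferentiableAt ℝ (fun u => a u ^ 2 / deriv ξ u) (w x) :=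
      ((ha.differentiable one_ne_zero _).pow 2).div (hξ'd _) (hξ' _ hwx)
    rw [deriv_comp_mul_deriv_of_rightInvOn isOpen_Ioo hx hrinv hw.continuous.continuousOn
      (fun _ _ => hξd _) (fun y hy => hξ' _ (hmaps (Ioo_subset_Icc_self hy))) hG]
    linear_combination deriv w x * (hEL _ hwx) - deriv w x * hrinv hx
  have hne : ξ α ≠ ξ β := fun h => hαβ.ne <| by
    rw [← hinv (left_mem_Icc.2 hαβ.le), h, hinv (right_mem_Icc.2 hαβ.le)]
  rw [← closure_Ioo hne]
  exact hopen.closure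
    ((((ha.comp (hw.of_le one_le_two)).pow 2).mul hw').continuous_deriv le_rfl)
    (((hv.comp hw.continuous).sub continuous_id).mul hw'.continuous)

theorem euler_lagrange_of_J_general (α β : ℝ) (hαβ : α < β) (v a : ℝ → ℝ)
    (hv : ContDiff ℝ 1 v) (ha : ContDiff ℝ 1 a)
    (ξ : ℝ → ℝ) (hξ : ContDiff ℝ 2 ξ) (hξ' : ∀ u ∈ Set.Icc α β, 0 < deriv ξ u) :
    -- The first variation of `J` at `ξ` in a direction `η` vanishing at the
    -- endpoints is `∫ (ξ(u) - v(u) + (a(u)²/ξ'(u))') η(u) du`; hence the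
    -- Euler–Lagrange equation of `J` is `ξ(u) - v(u) + (a(u)²/ξ'(u))' = 0`.
    (∀ η : ℝ → ℝ, ContDiff ℝ 1 η → η α = 0 → η β = 0 →
      HasDerivAt (fun t : ℝ => J α β v a (fun u => ξ u + t * η u))
        (∫ u in α..β,
          (ξ u - v u + deriv (fun w => (a w) ^ 2 / deriv ξ w) u) * η u) 0) ∧
    -- Moreover, if `ξ` solves the Euler–Lagrange equation and `w` is its
    -- (C²) inverse `u = u(ξ)`, then `(a(u)² u')' = (v(u) - ξ) u'` in the
    -- self-similar variable, i.e. the self-similar form of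
    -- `u_t + v(u)u_x - t(a²(u)u_x)_x = 0`.
    (∀ w : ℝ → ℝ, ContDiff ℝ 2 w →
      (∀ u ∈ Set.Icc α β, w (ξ u) = u) →
      (∀ u ∈ Set.Icc α β,
        ξ u - v u + deriv (fun w' => (a w') ^ 2 / deriv ξ w') u = 0) →
      ∀ x ∈ Set.Icc (ξ α) (ξ β),
        deriv (fun x' => (a (w x')) ^ 2 * deriv w x') x =
          (v (w x) - x) * deriv w x) := by
  refine ⟨fun η hη hηα hηβ => ?_, fun w hw hinv hEL => ?_⟩
  · have hξ'_uIcc : ∀ u ∈ [[α, β]], 0 < deriv ξ u := by rwa [uIcc_of_le hαβ.le]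
    have hξ'1 : ContDiff ℝ 1 (deriv ξ) := hξ.deriv'
    have hG : ContDiffOn ℝ 1 (fun u => a u ^ 2 / deriv ξ u) {u | deriv ξ u ≠ 0} :=
      (ha.pow 2).contDiffOn.div hξ'1.contDiffOn fun _ hu => hu
    refine (hasDerivAt_J_add_smul hv.continuous ha.continuous (hξ.of_le one_le_two) hη
      hξ'_uIcc).congr_deriv ?_
    exact integral_mul_sub_mul_deriv_eq_integral_add_deriv_mul
      ((hξ.continuous.sub hv.continuous).intervalIntegrable α β)
      (isOpen_ne_fun hξ'1.continuous continuous_const) (fun u hu => (hξ'_uIcc u hu).ne')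
      hG hη hηα hηβ
  · exact eqOn_deriv_sq_comp_mul_deriv_of_eulerLagrange hαβ hv.continuous ha hξ
      (fun u hu => (hξ' u hu).ne') hw hinv hEL

theorem euler_lagrange_of_J (α β : ℝ) (hαβ : α < β) (v a : ℝ → ℝ)
    (hv : ContDiff ℝ 1 v) (ha : ContDiff ℝ 1 a) (ha0 : ∀ u, 0 ≤ a u)
    (ξ : ℝ → ℝ) (hξ : ContDiff ℝ 2 ξ) (hξ' : ∀ u ∈ Set.Icc α β, 0 < deriv ξ u) :
    -- The first variation of `J` at `ξ` in a direction `η` vanishing at the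
    -- endpoints is `∫ (ξ(u) - v(u) + (a(u)²/ξ'(u))') η(u) du`; hence the
    -- Euler–Lagrange equation of `J` is `ξ(u) - v(u) + (a(u)²/ξ'(u))' = 0`.
    (∀ η : ℝ → ℝ, ContDiff ℝ 1 η → η α = 0 → η β = 0 →
      HasDerivAt (fun t : ℝ => J α β v a (fun u => ξ u + t * η u))
        (∫ u in α..β,
          (ξ u - v u + deriv (fun w => (a w) ^ 2 / deriv ξ w) u) * η u) 0) ∧
    -- Moreover, if `ξ` solves the Euler–Lagrange equation and `w` is its
    -- (C²) inverse `u = u(ξ)`, then `(a(u)² u')' = (v(u) - ξ) u'` in the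
    -- self-similar variable, i.e. the self-similar form of
    -- `u_t + v(u)u_x - t(a²(u)u_x)_x = 0`.
    (∀ w : ℝ → ℝ, ContDiff ℝ 2 w →
      (∀ u ∈ Set.Icc α β, w (ξ u) = u) →
      (∀ u ∈ Set.Icc α β,
        ξ u - v u + deriv (fun w' => (a w') ^ 2 / deriv ξ w') u = 0) →
      ∀ x ∈ Set.Icc (ξ α) (ξ β),
        deriv (fun x' => (a (w x')) ^ 2 * deriv w x') x =
          (v (w x) - x) * deriv w x) :=
  euler_lagrange_of_J_general α β hαβ v a hv ha ξ hξ hξ'
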